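/- arXiv:2309.06926 — 6 statements merged into one kernel-verified Lean document; each statement's English description precedes it below -/
import Mathlib

section
/- Let U ⊆ ℕ be the range of a strictly increasing sequence of natural numbers with strictly increasing differences of consecutive elements (i.e., U = {u_k : k ∈ ℕ} with 0 < u_{k+1} - u_k < u_{k+2} - u_{k+1} for all k). If Δ ⊆ ℕ is an interval on which U is periodic with period ω > 0, and |Δ| ≥ 2ω, then |Δ ∩ U| ≤ 2. -/
/-!
Strictly increasing gaps mean that no two pairs of consecutive elements of `U` are at the same
distance. Periodicity with period `ω` maps a pair of consecutive elements `x < y` of `U` with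
`a ≤ x` and `y + ω ≤ b` to the pair `x + ω < y + ω`, again consecutive and at the same distance,
which is therefore impossible. If `u i < u (i + 1) < u (i + 2)` all lie in `[a, b]`, the middle one
is either at most `b - ω` or at least `a + ω` because `[a, b]` has length at least `2ω`, so one of
the two pairs it belongs to could be shifted.
-/

def PeriodicOn (S Δ : Set ℕ) (ω : ℕ) : Prop :=
  ∀ x, x ∈ Δ → x + ω ∈ Δ → (x ∈ S ↔ x + ω ∈ S)

theorem Set.ncard_le_two_of_not_lt_lt {α : Type*} [LinearOrder α] {s : Set α}
    (h : ∀ x ∈ s, ∀ y ∈ s, ∀ z ∈ s, x < y → y < z → False) : s.ncard ≤ 2 := by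
  rcases s.finite_or_infinite with hs | hs
  · by_contra! h3
    obtain ⟨x, hx, y, hy, z, hz, hxy, hxz, hyz⟩ := (Set.two_lt_ncard hs).1 h3
    rcases hxy.lt_or_gt with h1 | h1 <;> rcases hxz.lt_or_gt with h2 | h2 <;>
      rcases hyz.lt_or_gt with h3 | h3
    all_goals first
      | exact h _ hx _ hy _ hz ‹_› ‹_› | exact h _ hx _ hz _ hy ‹_› ‹_›
      | exact h _ hy _ hx _ hz ‹_› ‹_› | exact h _ hy _ hz _ hx ‹_› ‹_›
      | exact h _ hz _ hx _ hy ‹_› ‹_› | exact h _ hz _ hy _ hx ‹_› ‹_›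
  · simp [hs.ncard]

def Consecutive (S : Set ℕ) (x y : ℕ) : Prop :=
  x ∈ S ∧ y ∈ S ∧ x < y ∧ ∀ z ∈ S, z ∉ Set.Ioo x y

theorem StrictMono.consecutive_range_iff {u : ℕ → ℕ} (hu : StrictMono u) {x y : ℕ} :
    Consecutive (Set.range u) x y ↔ ∃ k, u k = x ∧ u (k + 1) = y := by
  constructor
  · rintro ⟨⟨k, rfl⟩, ⟨l, rfl⟩, hkl, hgap⟩
    have hkl : k < l := hu.lt_iff_lt.1 hkl
    obtain rfl : l = k + 1 := by
      by_contra hne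
      exact hgap _ ⟨k + 1, rfl⟩ ⟨hu (Nat.lt_succ_self k), hu (by omega)⟩
    exact ⟨k, rfl, rfl⟩
  · rintro ⟨k, rfl, rfl⟩
    refine ⟨⟨k, rfl⟩, ⟨k + 1, rfl⟩, hu (Nat.lt_succ_self k), ?_⟩
    rintro _ ⟨l, rfl⟩ ⟨hkl, hlk⟩
    have hkl' : k < l := hu.lt_iff_lt.1 hkl
    have hlk' : l < k + 1 := hu.lt_iff_lt.1 hlk
    omega

theorem consecutive_range_eq_of_sub_eq {u : ℕ → ℕ} (hmono : ∀ k, u k < u (k + 1))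
    (hdiff : ∀ k, u (k + 1) - u k < u (k + 2) - u (k + 1)) ⦃x y x' y' : ℕ⦄
    (h : Consecutive (Set.range u) x y) (h' : Consecutive (Set.range u) x' y')
    (hsub : y - x = y' - x') : x = x' := by
  have hu : StrictMono u := strictMono_nat_of_lt_succ hmono
  obtain ⟨k, rfl, rfl⟩ := hu.consecutive_range_iff.1 h
  obtain ⟨l, rfl, rfl⟩ := hu.consecutive_range_iff.1 h'
  have hgap : StrictMono fun k ↦ u (k + 1) - u k := strictMono_nat_of_lt_succ hdiff
  rw [hgap.injective hsub]

namespace PeriodicOn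

variable {S : Set ℕ} {a b ω : ℕ}

theorem mem_iff (hper : PeriodicOn S (Set.Icc a b) ω) {t : ℕ} (ha : a ≤ t) (hb : t + ω ≤ b) :
    t ∈ S ↔ t + ω ∈ S :=
  hper t ⟨ha, by omega⟩ ⟨by omega, hb⟩

theorem consecutive_add_iff (hper : PeriodicOn S (Set.Icc a b) ω) {x y : ℕ} (ha : a ≤ x)
    (hb : y + ω ≤ b) : Consecutive S (x + ω) (y + ω) ↔ Consecutive S x y := by
  constructor
  · rintro ⟨hx, hy, hxy, hgap⟩
    refine ⟨(hper.mem_iff ha (by omega)).2 hx, (hper.mem_iff (by omega) hb).2 hy, by omega, ?_⟩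
    intro z hz ⟨hxz, hzy⟩
    exact hgap _ ((hper.mem_iff (by omega) (by omega)).1 hz) ⟨by omega, by omega⟩
  · rintro ⟨hx, hy, hxy, hgap⟩
    refine ⟨(hper.mem_iff ha (by omega)).1 hx, (hper.mem_iff (by omega) hb).1 hy, by omega, ?_⟩
    intro z hz ⟨hxz, hzy⟩
    have hz' : z - ω ∈ S :=
      (hper.mem_iff (by omega) (by omega)).2 (by rwa [Nat.sub_add_cancel (by omega)])
    exact hgap _ hz' ⟨by omega, by omega⟩

theorem not_consecutive_add (hper : PeriodicOn S (Set.Icc a b) ω) (hω : 0 < ω)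
    (hinj : ∀ ⦃x y x' y'⦄, Consecutive S x y → Consecutive S x' y' → y - x = y' - x' → x = x')
    {x y : ℕ} (ha : a ≤ x) (hb : y + ω ≤ b) : ¬ Consecutive S (x + ω) (y + ω) := by
  intro h
  have := hinj h ((hper.consecutive_add_iff ha hb).1 h) (by omega)
  omega

end PeriodicOn

theorem stmt_0 (u : ℕ → ℕ)
    (hmono : ∀ k, u k < u (k + 1))
    (hdiff : ∀ k, u (k + 1) - u k < u (k + 2) - u (k + 1))
    (a b ω : ℕ) (hω : 0 < ω)
    (hper : PeriodicOn (Set.range u) (Set.Icc a b) ω)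
    (hlen : 2 * ω ≤ b + 1 - a) :
    (Set.Icc a b ∩ Set.range u).ncard ≤ 2 := by
  have hu : StrictMono u := strictMono_nat_of_lt_succ hmono
  have hinj := consecutive_range_eq_of_sub_eq hmono hdiff
  refine Set.ncard_le_two_of_not_lt_lt ?_
  rintro _ ⟨⟨hia, -⟩, i, rfl⟩ _ ⟨-, l, rfl⟩ _ ⟨⟨-, hmb⟩, m, rfl⟩ hil hlm
  have him : u (i + 2) ≤ u m :=
    hu.le_iff_le.2 (Nat.lt_of_le_of_lt (hu.lt_iff_lt.1 hil) (hu.lt_iff_lt.1 hlm))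
  have hcons : ∀ k, Consecutive (Set.range u) (u k) (u (k + 1)) :=
    fun k ↦ hu.consecutive_range_iff.2 ⟨k, rfl, rfl⟩
  have hmid := hmono (i + 1)
  by_cases hup : u (i + 1) + ω ≤ b
  · exact hper.not_consecutive_add hω hinj hia hup
      ((hper.consecutive_add_iff hia hup).2 (hcons i))
  · have hshift : ∀ k, u (i + 1) ≤ u k → u k - ω + ω = u k := fun k hk ↦ by omega
    refine hper.not_consecutive_add hω hinj (x := u (i + 1) - ω) (y := u (i + 2) - ω)
      (by omega) (by omega) ?_
    rw [hshift _ le_rfl, hshift _ (hmono _).le]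
    exact hcons (i + 1)
end

section
/- Let S, S' ⊆ ℕ be infinite sets whose symmetric difference S △ S' is finite. Then S is loose if and only if S' is loose. -/
/-!
Changing `S` below `M` changes every `γ_S(n,t)` by at most `M`. For `t ≤ n^{1-ε}` and `n`
large this costs at most `t·M ≤ n^{1-ε}·(ε/2)·n^ε = (ε/2)·n` in `t·γ_S(n,t) ≥ ε·n`, so
`ε`-looseness of `S` yields `ε/2`-looseness of `S'`.
-/

/-- `δ_S(m) ≥ t`: there is no element of `S` strictly between `m` and `m + t`. -/
def GapGE (S : Set ℕ) (m t : ℕ) : Prop := ∀ j, m < j → j < m + t → j ∉ S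

/-- `γ_S(n,t)`: the number of `m ∈ S` with `δ_S(m) ≥ t` and `m + t < n`. -/
noncomputable def gamma (S : Set ℕ) (n t : ℕ) : ℕ :=
  {m | m ∈ S ∧ GapGE S m t ∧ m + t < n}.ncard

/-- `S` is `ε`-loose relative to `n`. -/
def EpsLoose (ε : ℝ) (S : Set ℕ) (n : ℕ) : Prop :=
  ∃ t : ℕ, 1 ≤ t ∧ ε * (n : ℝ) ≤ (t : ℝ) * (gamma S n t : ℝ) ∧
    (n : ℝ) ^ ε ≤ (t : ℝ) ∧ (t : ℝ) ≤ (n : ℝ) ^ (1 - ε)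

/-- `S` is loose. -/
def Loose (S : Set ℕ) : Prop :=
  ∃ ε > (0 : ℝ), ∀ᶠ n : ℕ in Filter.atTop, EpsLoose ε S n

section AgreeAbove

variable {S S' : Set ℕ} {M : ℕ}

lemma GapGE.of_agree_above (hagree : ∀ k, M ≤ k → (k ∈ S ↔ k ∈ S')) {m t : ℕ} (hm : M ≤ m)
    (hgap : GapGE S m t) : GapGE S' m t :=
  fun j hmj hjt hjS' => hgap j hmj hjt ((hagree j (hm.trans hmj.le)).2 hjS')

lemma gamma_le_gamma_add_of_agree_above (hagree : ∀ k, M ≤ k → (k ∈ S ↔ k ∈ S')) (n t : ℕ) :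
    gamma S n t ≤ gamma S' n t + M := by
  set A' : Set ℕ := {m | m ∈ S' ∧ GapGE S' m t ∧ m + t < n}
  have hA'_finite : A'.Finite :=
    (Set.finite_Iio n).subset fun m hm => (Nat.le_add_right m t).trans_lt hm.2.2
  have hsub : {m | m ∈ S ∧ GapGE S m t ∧ m + t < n} ⊆ A' ∪ Set.Iio M := by
    rintro m ⟨hmS, hgap, hmn⟩
    rcases lt_or_ge m M with hm | hm
    · exact Or.inr hm
    · exact Or.inl ⟨(hagree m hm).1 hmS, hgap.of_agree_above hagree hm, hmn⟩
  calc gamma S n t ≤ (A' ∪ Set.Iio M).ncard :=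
        Set.ncard_le_ncard hsub (hA'_finite.union (Set.finite_Iio M))
    _ ≤ A'.ncard + (Set.Iio M).ncard := Set.ncard_union_le _ _
    _ = gamma S' n t + M := by simp [A', gamma]

end AgreeAbove

lemma EpsLoose.half_of_gamma_le_add {ε : ℝ} {S S' : Set ℕ} {n M : ℕ} (hε : 0 ≤ ε)
    (hn : 1 ≤ n) (hM : (M : ℝ) ≤ ε / 2 * (n : ℝ) ^ ε)
    (hgamma : ∀ t, gamma S n t ≤ gamma S' n t + M) (h : EpsLoose ε S n) :
    EpsLoose (ε / 2) S' n := by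
  obtain ⟨t, ht1, hmass, hlow, hhigh⟩ := h
  have hn1 : (1 : ℝ) ≤ n := by exact_mod_cast hn
  have hloss : (t : ℝ) * M ≤ ε / 2 * n :=
    calc (t : ℝ) * M ≤ (n : ℝ) ^ (1 - ε) * (ε / 2 * (n : ℝ) ^ ε) :=
          mul_le_mul hhigh hM M.cast_nonneg (by positivity)
      _ = ε / 2 * n := by
          rw [mul_left_comm, ← Real.rpow_add (by positivity), sub_add_cancel, Real.rpow_one]
  have hgamma_t : (t : ℝ) * gamma S n t ≤ t * gamma S' n t + t * M := by
    rw [← mul_add]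
    exact mul_le_mul_of_nonneg_left (by exact_mod_cast hgamma t) t.cast_nonneg
  refine ⟨t, ht1, by linarith, ?_, ?_⟩
  · exact (Real.rpow_le_rpow_of_exponent_le hn1 (by linarith)).trans hlow
  · exact hhigh.trans (Real.rpow_le_rpow_of_exponent_le hn1 (by linarith))

lemma Loose.of_agree_above {S S' : Set ℕ} {M : ℕ} (hagree : ∀ k, M ≤ k → (k ∈ S ↔ k ∈ S'))
    (h : Loose S) : Loose S' := by
  obtain ⟨ε, hε, hev⟩ := h
  have hbig : Filter.Tendsto (fun n : ℕ => ε / 2 * (n : ℝ) ^ ε) Filter.atTop Filter.atTop :=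
    ((tendsto_rpow_atTop hε).comp tendsto_natCast_atTop_atTop).const_mul_atTop (by positivity)
  refine ⟨ε / 2, by positivity, ?_⟩
  filter_upwards [hev, hbig.eventually_ge_atTop (M : ℝ), Filter.eventually_ge_atTop 1]
    with n hn hM hn1
  exact hn.half_of_gamma_le_add hε.le hn1 hM (gamma_le_gamma_add_of_agree_above hagree n)

lemma Set.exists_agree_above_of_finite_symmDiff {S S' : Set ℕ} (hfin : (symmDiff S S').Finite) :
    ∃ M, ∀ k, M ≤ k → (k ∈ S ↔ k ∈ S') := by
  obtain ⟨B, hB⟩ := hfin.bddAbove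
  refine ⟨B + 1, fun k hk => ?_⟩
  have hk : k ∉ symmDiff S S' := fun hmem => by have := hB hmem; omega
  rw [Set.mem_symmDiff] at hk
  tauto

theorem stmt_7_general (S S' : Set ℕ) (hfin : (symmDiff S S').Finite) :
    Loose S ↔ Loose S' := by
  obtain ⟨M, hagree⟩ := Set.exists_agree_above_of_finite_symmDiff hfin
  exact ⟨Loose.of_agree_above hagree, Loose.of_agree_above fun k hk => (hagree k hk).symm⟩

theorem stmt_7 (S S' : Set ℕ) (hS : S.Infinite) (hS' : S'.Infinite)
    (hfin : (symmDiff S S').Finite) :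
    Loose S ↔ Loose S' :=
  stmt_7_general S S' hfin
end

section
/- Let S, S' ⊆ ℕ be infinite, and f : S → S' a strictly increasing η-bi-Lipschitz bijection with η ≥ 1 and 0 ∈ S ∩ S', f(0) = 0. Then for every n, t ≥ 1 we have γ_{S'}(n, t) ≥ γ_S(⌈n/η⌉, ⌈η t⌉). -/
/-! Since `f` is strictly increasing and onto `S'`, an element of `S'` in the gap after `f m` is
some `f k` with `k` in the gap after `m`; the lower Lipschitz bound stretches a gap of length
`< t` back to one of length `< η t`. The upper bound and `f 0 = 0` give `f m ≤ η m`, so the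
threshold `n / η` becomes `n`. Hence `f` maps the elements counted by
`γ_S(⌈n/η⌉, ⌈η t⌉)` injectively to elements counted by `γ_{S'}(n, t)`. -/

open Set

theorem gamma_le_gamma_of_injOn {S S' : Set ℕ} {f : ℕ → ℕ} {N T n t : ℕ} (hinj : InjOn f S)
    (hmaps : ∀ m ∈ S, GapGE S m T → m + T < N → f m ∈ S' ∧ GapGE S' (f m) t ∧ f m + t < n) :
    gamma S N T ≤ gamma S' n t := by
  refine ncard_le_ncard_of_injOn f (fun m ⟨hm, hgap, hlt⟩ => hmaps m hm hgap hlt)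
    (hinj.mono fun m hm => hm.1) ?_
  exact (finite_Iio n).subset fun m hm => mem_Iio.mpr (by have := hm.2.2; omega)

theorem sub_le_mul_sub_of_inv_mul_abs_le {η a b c d : ℝ} (hη : 0 < η) (hab : a ≤ b)
    (hcd : c ≤ d) (h : η⁻¹ * |a - b| ≤ |c - d|) : b - a ≤ η * (d - c) := by
  rw [abs_sub_comm, abs_of_nonneg (sub_nonneg.mpr hab), abs_sub_comm,
    abs_of_nonneg (sub_nonneg.mpr hcd), inv_mul_le_iff₀ hη] at h
  exact h

theorem GapGE.image {S S' : Set ℕ} {f : ℕ → ℕ} {η : ℝ} {m t T : ℕ} (hsurj : SurjOn f S S')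
    (hmono : StrictMonoOn f S) (hη : 0 < η)
    (hlow : ∀ m ∈ S, ∀ k ∈ S, m < k → ((k : ℝ) - m) ≤ η * ((f k : ℝ) - f m))
    (hT : η * t ≤ T) (hm : m ∈ S) (hgap : GapGE S m T) : GapGE S' (f m) t := by
  rintro j hmj hjt hj
  obtain ⟨k, hk, rfl⟩ := hsurj hj
  have hmk : m < k := (hmono.lt_iff_lt hm hk).mp hmj
  have hfk : (f k : ℝ) - f m < t := by
    have : (f k : ℝ) < f m + t := by exact_mod_cast hjt
    linarith
  have hkm : (k : ℝ) < m + T := by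
    nlinarith [hlow m hm k hk hmk, mul_lt_mul_of_pos_left hfk hη]
  exact hgap k hmk (by exact_mod_cast hkm) hk

theorem add_lt_of_add_lt_ceil_div {η x : ℝ} {m n t T : ℕ} (hη : 1 ≤ η) (hx : x ≤ η * m)
    (hT : η * t ≤ T) (hlt : m + T < ⌈(n : ℝ) / η⌉₊) : x + t < n := by
  have hηpos : 0 < η := by linarith
  have hmT : (m : ℝ) + T < n / η := by
    have h1 : (m : ℝ) + T + 1 ≤ ⌈(n : ℝ) / η⌉₊ := by exact_mod_cast hlt
    linarith [Nat.ceil_lt_add_one (by positivity : (0 : ℝ) ≤ n / η)]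
  have hηmT : η * (m + T) < n := by rwa [lt_div_iff₀' hηpos] at hmT
  have htT : (t : ℝ) ≤ T := by nlinarith [(Nat.cast_nonneg t : (0 : ℝ) ≤ t)]
  nlinarith [(Nat.cast_nonneg T : (0 : ℝ) ≤ T)]

theorem stmt_8_general (S S' : Set ℕ)
    (f : ℕ → ℕ) (hbij : Set.BijOn f S S')
    (hmono : ∀ m ∈ S, ∀ n ∈ S, m < n → f m < f n)
    (η : ℝ) (hη : 1 ≤ η)
    (hbil : ∀ m ∈ S, ∀ n ∈ S,
      η⁻¹ * |(m : ℝ) - (n : ℝ)| ≤ |(f m : ℝ) - (f n : ℝ)| ∧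
      |(f m : ℝ) - (f n : ℝ)| ≤ η * |(m : ℝ) - (n : ℝ)|)
    (h0S : 0 ∈ S) (hf0 : f 0 = 0) :
    ∀ n t : ℕ, 1 ≤ n → 1 ≤ t →
      gamma S ⌈(n : ℝ) / η⌉₊ ⌈η * (t : ℝ)⌉₊ ≤ gamma S' n t := by
  intro n t _ _
  have hηpos : 0 < η := by linarith
  have hstrict : StrictMonoOn f S := fun m hm k hk h => hmono m hm k hk h
  have hlow : ∀ m ∈ S, ∀ k ∈ S, m < k → ((k : ℝ) - m) ≤ η * ((f k : ℝ) - f m) :=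
    fun m hm k hk hmk => sub_le_mul_sub_of_inv_mul_abs_le hηpos (by exact_mod_cast hmk.le)
      (by exact_mod_cast (hmono m hm k hk hmk).le) (hbil m hm k hk).1
  have hup : ∀ m ∈ S, (f m : ℝ) ≤ η * m := fun m hm => by
    simpa [hf0] using (hbil m hm 0 h0S).2
  refine gamma_le_gamma_of_injOn hbij.injOn fun m hm hgap hlt => ⟨hbij.mapsTo hm, ?_, ?_⟩
  · exact hgap.image hbij.surjOn hstrict hηpos hlow (Nat.le_ceil _) hm
  · exact_mod_cast add_lt_of_add_lt_ceil_div hη (hup m hm) (Nat.le_ceil _) hlt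

theorem stmt_8 (S S' : Set ℕ) (hS : S.Infinite) (hS' : S'.Infinite)
    (f : ℕ → ℕ) (hbij : Set.BijOn f S S')
    (hmono : ∀ m ∈ S, ∀ n ∈ S, m < n → f m < f n)
    (η : ℝ) (hη : 1 ≤ η)
    (hbil : ∀ m ∈ S, ∀ n ∈ S,
      η⁻¹ * |(m : ℝ) - (n : ℝ)| ≤ |(f m : ℝ) - (f n : ℝ)| ∧
      |(f m : ℝ) - (f n : ℝ)| ≤ η * |(m : ℝ) - (n : ℝ)|)
    (h0S : 0 ∈ S) (h0S' : 0 ∈ S') (hf0 : f 0 = 0) :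
    ∀ n t : ℕ, 1 ≤ n → 1 ≤ t →
      gamma S ⌈(n : ℝ) / η⌉₊ ⌈η * (t : ℝ)⌉₊ ≤ gamma S' n t :=
  stmt_8_general S S' f hbij hmono η hη hbil h0S hf0
end

section
/- Suppose S ⊆ ℕ is the range of a strictly increasing sequence (a_k) with strictly increasing consecutive differences (a_{k+2} − a_{k+1} > a_{k+1} − a_k > 0 for all k). If a word w ∈ {0,1}^s contains at least two occurrences of the symbol 1, then the set T of occurrences of w in the characteristic sequence χ_S of S has at most one element, i.e., |T| ≤ 1. -/
/-!
Fix two occurrences of `1` in `w` with no `1` between them. In any occurrence of `w` starting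
at `m`, they land on two consecutive terms `a p < a (p + 1)`, so the gap `a (p + 1) - a p`
equals their distance in `w`. Since the gaps strictly increase, this pins down `p`, and
hence `m`.
-/

lemma exists_next_of_lt {α : Type*} [LinearOrder α] [WellFoundedLT α]
    {P : α → Prop} {i j : α} (hij : i < j) (hj : P j) :
    ∃ j', i < j' ∧ P j' ∧ ∀ k, i < k → k < j' → ¬ P k := by
  obtain ⟨j', ⟨hij', hj'⟩, hmin⟩ :=
    wellFounded_lt.has_min {k | i < k ∧ P k} ⟨j, hij, hj⟩
  exact ⟨j', hij', hj', fun k hik hkj hk => hmin k ⟨hik, hk⟩ hkj⟩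

lemma StrictMono.eq_apply_succ_of_forall_le {α : Type*} [PartialOrder α] {a : ℕ → α}
    (ha : StrictMono a) {p q : ℕ} (hpq : a p < a q) (hnext : ∀ k, a p < a k → a q ≤ a k) :
    a q = a (p + 1) :=
  le_antisymm (hnext _ (ha (Nat.lt_succ_self p)))
    (ha.monotone (Nat.succ_le_of_lt (ha.lt_iff_lt.mp hpq)))

lemma exists_consecutive_of_occurrence {a : ℕ → ℕ} (ha : StrictMono a) {s m : ℕ}
    {w : Fin s → Bool} (hm : ∀ i : Fin s, m + (i : ℕ) ∈ Set.range a ↔ w i = true)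
    {i j : Fin s} (hij : i < j) (hi : w i = true) (hj : w j = true)
    (hgap : ∀ k, i < k → k < j → w k ≠ true) :
    ∃ p, a p = m + i ∧ a (p + 1) = m + j := by
  obtain ⟨p, hp⟩ := (hm i).2 hi
  obtain ⟨q, hq⟩ := (hm j).2 hj
  have hij' : (i : ℕ) < j := hij
  refine ⟨p, hp, ?_⟩
  rw [← hq]
  refine (ha.eq_apply_succ_of_forall_le (by omega) fun k hpk => ?_).symm
  by_contra! hkq
  let t : Fin s := ⟨a k - m, by omega⟩
  exact hgap t (Fin.lt_def.mpr (by simp only [t]; omega))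
    (Fin.lt_def.mpr (by simp only [t]; omega)) ((hm t).1 ⟨k, by simp only [t]; omega⟩)

theorem stmt_13 (a : ℕ → ℕ)
    (hmono : ∀ k, a k < a (k + 1))
    (hdiff : ∀ k, a (k + 1) - a k < a (k + 2) - a (k + 1))
    (s : ℕ) (w : Fin s → Bool)
    (htwo : ∃ i j : Fin s, i ≠ j ∧ w i = true ∧ w j = true) :
    Set.Subsingleton
      {m : ℕ | ∀ i : Fin s, (m + (i : ℕ) ∈ Set.range a ↔ w i = true)} := by
  have ha : StrictMono a := strictMono_nat_of_lt_succ hmono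
  have hgaps : StrictMono fun k => a (k + 1) - a k := strictMono_nat_of_lt_succ hdiff
  obtain ⟨i, hi, j, hij, hj, hgap⟩ : ∃ i : Fin s, w i = true ∧ ∃ j, i < j ∧ w j = true ∧
      ∀ k, i < k → k < j → w k ≠ true := by
    obtain ⟨i₀, j₀, hne, hi₀, hj₀⟩ := htwo
    rcases hne.lt_or_gt with h | h
    · exact ⟨i₀, hi₀, exists_next_of_lt h hj₀⟩
    · exact ⟨j₀, hj₀, exists_next_of_lt h hi₀⟩
  intro m hm m' hm'
  obtain ⟨p, hp, hp'⟩ := exists_consecutive_of_occurrence ha hm hij hi hj hgap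
  obtain ⟨q, hq, hq'⟩ := exists_consecutive_of_occurrence ha hm' hij hi hj hgap
  have hpq : p = q := hgaps.injective (show a (p + 1) - a p = a (q + 1) - a q by omega)
  subst hpq
  omega
end

section
/- Let S ⊆ ℕ be infinite and n, t ∈ ℤ⁺. Then t·(γ_S(n,t) − 1) ≤ 2·f_S(n) or t ≤ ω_S(n). -/
/-- `f_S(n)`: the least `ℓ` such that for some `ω` with `0 < ω ≤ ℓ`,
`S` is periodic on `{i | ℓ - ω ≤ i ≤ n - (ℓ - ω)}` with period `ω`. -/
noncomputable def fS (S : Set ℕ) (n : ℕ) : ℕ :=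
  sInf {ℓ | ∃ ω, 0 < ω ∧ ω ≤ ℓ ∧ PeriodicOn S (Set.Icc (ℓ - ω) (n - (ℓ - ω))) ω}

/-- `ω_S(n)`: the least positive `ω` such that `S` is periodic on
`{i | f_S(n) - ω ≤ i ≤ n - (f_S(n) - ω)}` with period `ω`. -/
noncomputable def omegaS (S : Set ℕ) (n : ℕ) : ℕ :=
  sInf {ω | 0 < ω ∧ PeriodicOn S (Set.Icc (fS S n - ω) (n - (fS S n - ω))) ω}

/-!
Suppose `ω := ω_S(n) < t` and put `f := f_S(n)`. On the window `[f - ω, n - (f - ω)]` the set `S`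
has period `ω`, so an `m ∈ S` whose next element of `S` is at least `t > ω` away cannot have both
`m` and `m + ω` in the window. Hence every element counted by `γ_S(n,t)` lies in `[0, f - 1]` or in
`[n + 1 - f, n - 1 - t]`. These elements are pairwise at least `t` apart, so each of the two
intervals holds at most one more of them than its length divided by `t`, which gives `t (γ - 1) ≤ 2 f`.
-/

def IsSpaced (t : ℕ) (s : Set ℕ) : Prop := ∀ a ∈ s, ∀ b ∈ s, a < b → a + t ≤ b

namespace IsSpaced

variable {t : ℕ} {s : Set ℕ}

theorem mono {s' : Set ℕ} (hs : IsSpaced t s) (h : s' ⊆ s) : IsSpaced t s' :=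
  fun a ha b hb => hs a (h ha) b (h hb)

theorem mul_ncard_sub_one_le {lo hi : ℕ} (hs : IsSpaced t s) (hsub : s ⊆ Set.Icc lo hi) :
    t * (s.ncard - 1) ≤ hi - lo := by
  rcases t.eq_zero_or_pos with rfl | ht
  · simp
  have hmono : StrictMonoOn (fun m => (m - lo) / t) s := by
    intro a ha b hb hab
    have := hs a ha b hb hab
    have := (hsub ha).1
    calc (a - lo) / t < (a - lo + t) / t := by rw [Nat.add_div_right _ ht]; exact lt_add_one _
      _ ≤ (b - lo) / t := Nat.div_le_div_right (by omega)
  have hcard : s.ncard ≤ (hi - lo) / t + 1 := by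
    rw [← Set.ncard_Iic_nat]
    refine Set.ncard_le_ncard_of_injOn _ (fun m hm => ?_) hmono.injOn (Set.finite_Iic _)
    exact Nat.div_le_div_right (Nat.sub_le_sub_right (hsub hm).2 lo)
  calc t * (s.ncard - 1) ≤ t * ((hi - lo) / t) := Nat.mul_le_mul_left t (Nat.sub_le_of_le_add hcard)
    _ ≤ hi - lo := Nat.mul_div_le _ _

theorem mul_ncard_sub_one_le_of_subset_union {a b c d : ℕ} (hs : IsSpaced t s)
    (hsub : s ⊆ Set.Icc a b ∪ Set.Icc c d) : t * (s.ncard - 1) ≤ (b - a) + (d - c) + t := by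
  set L := s ∩ Set.Icc a b
  set R := s ∩ Set.Icc c d
  have hL : t * (L.ncard - 1) ≤ b - a :=
    (hs.mono Set.inter_subset_left).mul_ncard_sub_one_le Set.inter_subset_right
  have hR : t * (R.ncard - 1) ≤ d - c :=
    (hs.mono Set.inter_subset_left).mul_ncard_sub_one_le Set.inter_subset_right
  have hsplit : s.ncard ≤ L.ncard + R.ncard := by
    calc s.ncard = (L ∪ R).ncard := by rw [← Set.inter_union_distrib_left, Set.inter_eq_left.2 hsub]
      _ ≤ L.ncard + R.ncard := Set.ncard_union_le L R
  rcases L.ncard.eq_zero_or_pos with hL0 | hL0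
  · calc t * (s.ncard - 1) ≤ t * (R.ncard - 1) := Nat.mul_le_mul_left t (by omega)
      _ ≤ _ := by omega
  rcases R.ncard.eq_zero_or_pos with hR0 | hR0
  · calc t * (s.ncard - 1) ≤ t * (L.ncard - 1) := Nat.mul_le_mul_left t (by omega)
      _ ≤ _ := by omega
  calc t * (s.ncard - 1) ≤ t * (L.ncard - 1) + t * (R.ncard - 1) + t := by
        rw [← Nat.mul_add, ← Nat.mul_add_one]; exact Nat.mul_le_mul_left t (by omega)
    _ ≤ _ := by omega

end IsSpaced

theorem GapGE.add_le {S : Set ℕ} {a b t : ℕ} (hgap : GapGE S a t) (hb : b ∈ S) (hab : a < b) :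
    a + t ≤ b := by
  by_contra h
  exact hgap b hab (by omega) hb

theorem PeriodicOn.lt_or_lt_of_gapGE {S : Set ℕ} {lo hi ω t m : ℕ}
    (hper : PeriodicOn S (Set.Icc lo hi) ω) (hωt : ω < t) (hω : 0 < ω) (hm : m ∈ S)
    (hgap : GapGE S m t) : m < lo ∨ hi < m + ω := by
  by_contra! h
  exact hgap (m + ω) (by omega) (by omega) ((hper m ⟨h.1, by omega⟩ ⟨by omega, h.2⟩).1 hm)

section PeriodData

variable (S : Set ℕ) (n : ℕ)

theorem exists_periodicOn_fS :
    ∃ ω, 0 < ω ∧ ω ≤ fS S n ∧ PeriodicOn S (Set.Icc (fS S n - ω) (n - (fS S n - ω))) ω := by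
  refine Nat.sInf_mem
    (s := {ℓ | ∃ ω, 0 < ω ∧ ω ≤ ℓ ∧ PeriodicOn S (Set.Icc (ℓ - ω) (n - (ℓ - ω))) ω})
    ⟨n + 1, n + 1, n.succ_pos, le_rfl, fun x _ hxω => ?_⟩
  have := hxω.2
  omega

theorem fS_le_succ : fS S n ≤ n + 1 := by
  apply Nat.sInf_le
  refine ⟨n + 1, n.succ_pos, le_rfl, fun x _ hxω => ?_⟩
  have := hxω.2
  omega

theorem omegaS_pos_and_periodicOn :
    0 < omegaS S n ∧
      PeriodicOn S (Set.Icc (fS S n - omegaS S n) (n - (fS S n - omegaS S n))) (omegaS S n) := by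
  obtain ⟨ω, hω, -, hper⟩ := exists_periodicOn_fS S n
  exact Nat.sInf_mem (s := {ω | 0 < ω ∧ _}) ⟨ω, hω, hper⟩

theorem omegaS_le_fS : omegaS S n ≤ fS S n := by
  obtain ⟨ω, hω, hωf, hper⟩ := exists_periodicOn_fS S n
  exact (show omegaS S n ≤ ω from Nat.sInf_le ⟨hω, hper⟩).trans hωf

end PeriodData

theorem gamma_set_isSpaced (S : Set ℕ) (n t : ℕ) :
    IsSpaced t {m | m ∈ S ∧ GapGE S m t ∧ m + t < n} :=
  fun _ ha _ hb hab => ha.2.1.add_le hb.1 hab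

theorem stmt_14_general (S : Set ℕ) (n t : ℕ) :
    t * (gamma S n t - 1) ≤ 2 * fS S n ∨ t ≤ omegaS S n := by
  refine or_iff_not_imp_right.2 fun hωt => ?_
  push Not at hωt
  obtain ⟨hω, hper⟩ := omegaS_pos_and_periodicOn S n
  have hωf := omegaS_le_fS S n
  have hf := fS_le_succ S n
  set f := fS S n
  set A := {m | m ∈ S ∧ GapGE S m t ∧ m + t < n}
  have hA : ∀ m ∈ A, m ≤ f - 1 ∨ n - f < m := fun m ⟨hmS, hgap, _⟩ => by
    have := hper.lt_or_lt_of_gapGE hωt hω hmS hgap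
    omega
  -- The two-interval bound charges an extra `t`; it is affordable only when the right interval
  by_cases hright : ∃ m ∈ A, n - f < m
  · obtain ⟨m₀, ⟨-, -, hm₀⟩, hfm₀⟩ := hright
    have hsub : A ⊆ Set.Icc 0 (f - 1) ∪ Set.Icc (n + 1 - f) (n - 1 - t) := fun m hm => by
      have := hm.2.2
      rcases hA m hm with h | h
      · exact Or.inl ⟨m.zero_le, h⟩
      · exact Or.inr ⟨by omega, by omega⟩
    have := (gamma_set_isSpaced S n t).mul_ncard_sub_one_le_of_subset_union hsub
    exact this.trans (by omega)
  · push Not at hright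
    have hsub : A ⊆ Set.Icc 0 (f - 1) := fun m hm => by
      have := hright m hm
      have := hA m hm
      exact ⟨m.zero_le, by omega⟩
    exact ((gamma_set_isSpaced S n t).mul_ncard_sub_one_le hsub).trans (by omega)

theorem stmt_14 (S : Set ℕ) (hS : S.Infinite) (n t : ℕ) (hn : 1 ≤ n) (ht : 1 ≤ t) :
    t * (gamma S n t - 1) ≤ 2 * fS S n ∨ t ≤ omegaS S n :=
  stmt_14_general S n t
end

section
/- Let a, b, c ∈ ℕ with a, b ∈ S, a < b < c, c ∈ S, where a, b, c are the three least elements of Δ ∩ S for an interval Δ of length |Δ| ≥ 2ω on which S is periodic with period ω > 0, and suppose the consecutive differences of elements of S strictly increase. Then a contradiction ensues; equivalently, no interval of length at least 2ω on which such an S is ω-periodic can contain three elements of S. -/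
namespace PeriodicOn

variable {S : Set ℕ} {a b ω x : ℕ}

theorem add_mem (h : PeriodicOn S (Set.Icc a b) ω) (hax : a ≤ x) (hxb : x + ω ≤ b)
    (hx : x ∈ S) : x + ω ∈ S :=
  (h x ⟨hax, by omega⟩ ⟨by omega, hxb⟩).1 hx

theorem sub_mem (h : PeriodicOn S (Set.Icc a b) ω) (hax : a + ω ≤ x) (hxb : x ≤ b)
    (hx : x ∈ S) : x - ω ∈ S :=
  (h (x - ω) ⟨by omega, by omega⟩ ⟨by omega, by omega⟩).2 (by rwa [Nat.sub_add_cancel (by omega)])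

end PeriodicOn

section IncreasingGaps

variable {u : ℕ → ℕ}

theorem StrictMono.apply_succ_le_of_lt_of_mem_range (hu : StrictMono u) {m s : ℕ}
    (hlt : u m < s) (hs : s ∈ Set.range u) : u (m + 1) ≤ s := by
  obtain ⟨n, rfl⟩ := hs
  exact hu.monotone (hu.lt_iff_lt.1 hlt)

theorem apply_succ_add_notMem_range (hu : StrictMono u)
    (hgap : StrictMono fun k => u (k + 1) - u k) {k d : ℕ} (hd : 0 < d)
    (hk : u k + d ∈ Set.range u) : u (k + 1) + d ∉ Set.range u := by
  obtain ⟨j, hj⟩ := hk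
  have hk_succ := hu k.lt_add_one
  have hj_succ := hu j.lt_add_one
  have hkj : k < j := hu.lt_iff_lt.1 (by omega)
  have hwider : u (k + 1) - u k < u (j + 1) - u j := hgap hkj
  intro hmem
  have := hu.apply_succ_le_of_lt_of_mem_range (m := j) (by omega) hmem
  omega

theorem apply_add_two_gt_of_periodicOn (hu : StrictMono u)
    (hgap : StrictMono fun k => u (k + 1) - u k) {a b ω : ℕ} (hω : 0 < ω)
    (hper : PeriodicOn (Set.range u) (Set.Icc a b) ω) (hlen : 2 * ω ≤ b + 1 - a)
    {i : ℕ} (hai : a ≤ u i) : b < u (i + 2) := by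
  by_contra! hb
  have hpq : u i < u (i + 1) := hu i.lt_add_one
  have hqr : u (i + 1) < u (i + 2) := hu (by omega)
  rcases le_or_gt (u (i + 1) + ω) b with hup | hdown
  · exact apply_succ_add_notMem_range hu hgap hω
      (hper.add_mem hai (by omega) ⟨i, rfl⟩) (hper.add_mem (by omega) hup ⟨i + 1, rfl⟩)
  · obtain ⟨m, hm⟩ := hper.sub_mem (x := u (i + 1)) (by omega) (by omega) ⟨i + 1, rfl⟩
    have hr := hper.sub_mem (x := u (i + 2)) (by omega) hb ⟨i + 2, rfl⟩
    have hm_succ := hu m.lt_add_one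
    have hle : u (m + 1) ≤ u (i + 2) - ω :=
      hu.apply_succ_le_of_lt_of_mem_range (by omega) hr
    refine apply_succ_add_notMem_range hu hgap hω (k := m) ⟨i + 1, by omega⟩ ?_
    exact hper.add_mem (by omega) (by omega) ⟨m + 1, rfl⟩

end IncreasingGaps

theorem stmt_16 (u : ℕ → ℕ)
    (hmono : ∀ k, u k < u (k + 1))
    (hdiff : ∀ k, u (k + 1) - u k < u (k + 2) - u (k + 1))
    (a b ω : ℕ) (hω : 0 < ω)
    (hper : PeriodicOn (Set.range u) (Set.Icc a b) ω)
    (hlen : 2 * ω ≤ b + 1 - a) :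
    ¬ ∃ x y z : ℕ, x ∈ Set.Icc a b ∩ Set.range u ∧ y ∈ Set.Icc a b ∩ Set.range u ∧
      z ∈ Set.Icc a b ∩ Set.range u ∧ x < y ∧ y < z := by
  rintro ⟨x, y, z, ⟨⟨hax, -⟩, i, rfl⟩, ⟨-, j, rfl⟩, ⟨⟨-, hzb⟩, k, rfl⟩, hxy, hyz⟩
  have hu : StrictMono u := strictMono_nat_of_lt_succ hmono
  have hik : i + 2 ≤ k := by
    have := hu.lt_iff_lt.1 hxy
    have := hu.lt_iff_lt.1 hyz
    omega
  have := apply_add_two_gt_of_periodicOn hu (strictMono_nat_of_lt_succ hdiff) hω hper hlen hax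
  have := hu.monotone hik
  omega
end
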